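/- Let R be a commutative ring and f ∈ R((t)) with f = 1 + f' where every coefficient of f' is nilpotent in R. Then f is invertible in R((t)). -/

import Mathlib

/-!
Split `f'` at degree `1`. Its part in degrees `≤ 0` has finite support, since the support of a
Laurent series is bounded below, so it is a finite sum of monomials `c tⁿ` with `c` nilpotent and
is therefore nilpotent. The rest of `1 + f'` is `1` plus a series of positive order, a unit by the
geometric series. A unit plus a nilpotent element is a unit.
-/

namespace HahnSeries

variable {Γ R : Type*}

theorem support_truncLT_finite [LinearOrder Γ] [LocallyFiniteOrder Γ] [Zero R] (c : Γ)
    (x : R⟦Γ⟧) : (truncLT c x).support.Finite := by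
  obtain h | h := (truncLT c x).support.eq_empty_or_nonempty
  · simp [h]
  · refine BddBelow.finite_of_bddAbove ⟨_, fun _ ↦ (isWF_support _).min_le h⟩ ⟨c, fun j hj ↦ ?_⟩
    rw [support_truncLT] at hj
    exact hj.2.le

theorem le_orderTop_sub_truncLT [LinearOrder Γ] [AddGroup R] (c : Γ) (x : R⟦Γ⟧) :
    (c : WithTop Γ) ≤ (x - truncLT c x).orderTop :=
  le_orderTop_iff_forall.2 fun j hj ↦ by
    simp [coeff_truncLT_of_lt (WithTop.coe_lt_coe.1 hj)]

theorem isNilpotent_of_support_finite [AddCommMonoid Γ] [PartialOrder Γ]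
    [IsOrderedCancelAddMonoid Γ] [CommSemiring R] {x : R⟦Γ⟧} (hx : x.support.Finite)
    (h : ∀ g, IsNilpotent (x.coeff g)) : IsNilpotent x := by
  classical
  have hsum : x = ∑ g ∈ hx.toFinset, single g (x.coeff g) := by
    ext j
    rw [coeff_sum, Finset.sum_eq_single j]
    · simp
    · exact fun g _ hgj ↦ by simp [coeff_single_of_ne hgj.symm]
    · exact fun hj ↦ by simpa using hj
  rw [hsum]
  refine isNilpotent_sum fun g _ ↦ ?_
  obtain ⟨n, hn⟩ := h g
  exact ⟨n, by rw [single_pow, hn, single_eq_zero]⟩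

end HahnSeries

open HahnSeries

theorem isUnit_one_add_of_forall_coeff_nilpotent
    (R : Type*) [CommRing R] (f' : LaurentSeries R)
    (h : ∀ n : ℤ, IsNilpotent (f'.coeff n)) :
    IsUnit (1 + f') := by
  have hN : IsNilpotent (truncLT 1 f') := by
    refine isNilpotent_of_support_finite (support_truncLT_finite 1 f') fun n ↦ ?_
    rw [HahnSeries.coeff_truncLT]
    split_ifs
    exacts [h n, IsNilpotent.zero]
  have hU : IsUnit (1 + (f' - truncLT 1 f')) := by
    refine isUnit_of_orderTop_pos ?_
    rw [add_sub_cancel_left]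
    exact lt_of_lt_of_le (WithTop.coe_lt_coe.2 one_pos) (le_orderTop_sub_truncLT 1 f')
  simpa only [add_assoc, sub_add_cancel] using
    hN.isUnit_add_left_of_commute hU (Commute.all _ _)
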